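/- Let T be a bounded linear operator on a complex Hilbert space H and n ≥ 2 an integer. Then w(T) ≤ (log((1/2^{n−1}) e^{w(T^n)} + (1 − 1/2^{n−1}) e^{‖T‖^n}))^{1/n} ≤ ‖T‖. In particular, if T^n = 0, then w(T) ≤ (log(1/2^{n−1} + (1 − 1/2^{n−1})e))^{1/n} ‖T‖. -/

import Mathlib

open scoped InnerProductSpace
open Set Filter

variable {H : Type*} [NormedAddCommGroup H] [InnerProductSpace ℂ H] [CompleteSpace H]

/-- The numerical radius of a bounded linear operator. -/
noncomputable def numRad (T : H →L[ℂ] H) : ℝ :=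
  ⨆ x : {x : H // ‖x‖ = 1}, ‖(⟪T x, x⟫_ℂ)‖

/-- The absolute value `|T| = (T*T)^(1/2)` of a bounded linear operator. -/
noncomputable def opAbs (T : H →L[ℂ] H) : H →L[ℂ] H := CFC.sqrt (star T * T)

/-!
For a unit vector `x`, write `u = ⟪x, u⟫ x + u'` and `v = ⟪x, v⟫ x + v'` with `u', v' ⊥ x`; then
`|⟪u, v⟫| ≥ |⟪x, u⟫| |⟪x, v⟫| - ‖u'‖ ‖v'‖ ≥ 2 |⟪x, u⟫| |⟪x, v⟫| - ‖u‖ ‖v‖`, the second step being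
Cauchy–Schwarz in `ℝ²` for `‖u‖² = |⟪x, u⟫|² + ‖u'‖²`. With `u = B x`, `v = A† x` this reads
`|⟪A B x, x⟫| ≥ 2 |⟪A x, x⟫| |⟪B x, x⟫| - ‖A‖ ‖B‖`, and induction on the power gives
`2^(n-1) |⟪T x, x⟫|^n ≤ |⟪T^n x, x⟫| + (2^(n-1) - 1) ‖T‖^n`, i.e.
`w(T)^n ≤ λ w(T^n) + (1 - λ) ‖T‖^n` with `λ = 1 / 2^(n-1)`. Convexity of `exp` turns this
convex combination into the logarithmic bound; when `T^n = 0` it also gives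
`1 - λ ≤ log (λ + (1 - λ) e)`.
-/

lemma add_mul_le_mul_of_sq_eq {a b c d p q : ℝ} (hp : 0 ≤ p) (hq : 0 ≤ q)
    (hpac : p ^ 2 = a ^ 2 + c ^ 2) (hqbd : q ^ 2 = b ^ 2 + d ^ 2) :
    a * b + c * d ≤ p * q := by
  refine le_of_sq_le_sq ?_ (mul_nonneg hp hq)
  rw [mul_pow, hpac, hqbd]
  nlinarith [sq_nonneg (a * d - b * c)]

lemma Real.le_rpow_one_div_of_pow_le {x y : ℝ} {n : ℕ} (hx : 0 ≤ x) (hn : n ≠ 0)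
    (h : x ^ n ≤ y) : x ≤ y ^ ((1 : ℝ) / n) := by
  rw [one_div, Real.le_rpow_inv_iff_of_pos hx ((pow_nonneg hx n).trans h) (by positivity),
    Real.rpow_natCast]
  exact h

lemma Real.rpow_one_div_le_of_le_pow {x y : ℝ} {n : ℕ} (hx : 0 ≤ x) (hy : 0 ≤ y) (hn : n ≠ 0)
    (h : y ≤ x ^ n) : y ^ ((1 : ℝ) / n) ≤ x := by
  rw [one_div, Real.rpow_inv_le_iff_of_pos hy hx (by positivity), Real.rpow_natCast]
  exact h

lemma exp_convexComb_le {t : ℝ} (ht0 : 0 ≤ t) (ht1 : t ≤ 1) (a b : ℝ) :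
    Real.exp (t * a + (1 - t) * b) ≤ t * Real.exp a + (1 - t) * Real.exp b :=
  convexOn_exp.2 (mem_univ a) (mem_univ b) ht0 (sub_nonneg.2 ht1) (add_sub_cancel t 1)

lemma le_log_convexComb_exp {t : ℝ} (ht0 : 0 ≤ t) (ht1 : t ≤ 1) (a b : ℝ) :
    t * a + (1 - t) * b ≤ Real.log (t * Real.exp a + (1 - t) * Real.exp b) :=
  (Real.le_log_iff_exp_le ((Real.exp_pos _).trans_le (exp_convexComb_le ht0 ht1 a b))).2
    (exp_convexComb_le ht0 ht1 a b)

lemma log_convexComb_exp_le {t : ℝ} (ht0 : 0 ≤ t) (ht1 : t ≤ 1) {a b : ℝ} (hab : a ≤ b) :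
    Real.log (t * Real.exp a + (1 - t) * Real.exp b) ≤ b := by
  rw [Real.log_le_iff_le_exp ((Real.exp_pos _).trans_le (exp_convexComb_le ht0 ht1 a b))]
  nlinarith [Real.exp_le_exp.2 hab]

section InnerProductSpace

variable {𝕜 E : Type*} [RCLike 𝕜] [NormedAddCommGroup E] [InnerProductSpace 𝕜 E]

lemma inner_sub_inner_smul_eq_zero {x : E} (hx : ‖x‖ = 1) (u : E) :
    ⟪x, u - ⟪x, u⟫_𝕜 • x⟫_𝕜 = 0 := by
  simp [inner_sub_right, inner_smul_right, inner_self_eq_norm_sq_to_K, hx]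

lemma norm_sq_eq_norm_inner_sq_add_norm_sub_sq {x : E} (hx : ‖x‖ = 1) (u : E) :
    ‖u‖ ^ 2 = ‖⟪x, u⟫_𝕜‖ ^ 2 + ‖u - ⟪x, u⟫_𝕜 • x‖ ^ 2 := by
  have horth : ⟪⟪x, u⟫_𝕜 • x, u - ⟪x, u⟫_𝕜 • x⟫_𝕜 = 0 := by
    rw [inner_smul_left, inner_sub_inner_smul_eq_zero hx, mul_zero]
  have hpyth := norm_add_sq_eq_norm_sq_add_norm_sq_of_inner_eq_zero _ _ horth
  rw [add_sub_cancel, norm_smul, hx, mul_one] at hpyth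
  rw [sq, sq, sq, hpyth]

lemma inner_eq_conj_mul_add_inner_sub {x : E} (hx : ‖x‖ = 1) (u v : E) :
    ⟪u, v⟫_𝕜 =
      (starRingEnd 𝕜) ⟪x, u⟫_𝕜 * ⟪x, v⟫_𝕜 + ⟪u - ⟪x, u⟫_𝕜 • x, v - ⟪x, v⟫_𝕜 • x⟫_𝕜 := by
  have hu : ⟪u - ⟪x, u⟫_𝕜 • x, x⟫_𝕜 = 0 := by
    rw [← inner_conj_symm, inner_sub_inner_smul_eq_zero hx, map_zero]
  rw [inner_sub_right, inner_smul_right, hu, mul_zero, sub_zero, inner_sub_left, inner_smul_left]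
  ring

lemma two_mul_norm_inner_mul_norm_inner_sub_le {x : E} (hx : ‖x‖ = 1) (u v : E) :
    2 * ‖⟪u, x⟫_𝕜‖ * ‖⟪x, v⟫_𝕜‖ - ‖u‖ * ‖v‖ ≤ ‖⟪u, v⟫_𝕜‖ := by
  set u' := u - ⟪x, u⟫_𝕜 • x
  set v' := v - ⟪x, v⟫_𝕜 • x
  have hsplit : ‖⟪x, u⟫_𝕜‖ * ‖⟪x, v⟫_𝕜‖ + ‖u'‖ * ‖v'‖ ≤ ‖u‖ * ‖v‖ :=
    add_mul_le_mul_of_sq_eq (norm_nonneg u) (norm_nonneg v)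
      (norm_sq_eq_norm_inner_sq_add_norm_sub_sq hx u)
      (norm_sq_eq_norm_inner_sq_add_norm_sub_sq hx v)
  have hinner : ‖⟪x, u⟫_𝕜‖ * ‖⟪x, v⟫_𝕜‖ - ‖u'‖ * ‖v'‖ ≤ ‖⟪u, v⟫_𝕜‖ := by
    rw [inner_eq_conj_mul_add_inner_sub hx u v]
    calc ‖⟪x, u⟫_𝕜‖ * ‖⟪x, v⟫_𝕜‖ - ‖u'‖ * ‖v'‖
        ≤ ‖(starRingEnd 𝕜) ⟪x, u⟫_𝕜 * ⟪x, v⟫_𝕜‖ - ‖⟪u', v'⟫_𝕜‖ := by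
          rw [norm_mul, RCLike.norm_conj]
          exact sub_le_sub_left (norm_inner_le_norm u' v') _
      _ ≤ _ := norm_sub_le_norm_add _ _
  rw [norm_inner_symm]
  linarith

lemma norm_inner_le_opNorm {x : E} (hx : ‖x‖ = 1) (A : E →L[𝕜] E) : ‖⟪A x, x⟫_𝕜‖ ≤ ‖A‖ :=
  (norm_inner_le_norm (A x) x).trans (by rw [hx, mul_one]; exact A.unit_le_opNorm x hx.le)

variable [CompleteSpace E]

lemma two_mul_norm_inner_mul_norm_inner_sub_le_norm_inner_mul {x : E} (hx : ‖x‖ = 1)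
    (A B : E →L[𝕜] E) :
    2 * ‖⟪A x, x⟫_𝕜‖ * ‖⟪B x, x⟫_𝕜‖ - ‖A‖ * ‖B‖ ≤ ‖⟪(A * B) x, x⟫_𝕜‖ := by
  have h := two_mul_norm_inner_mul_norm_inner_sub_le (𝕜 := 𝕜) hx (B x)
    (ContinuousLinearMap.adjoint A x)
  rw [ContinuousLinearMap.adjoint_inner_right, ContinuousLinearMap.adjoint_inner_right] at h
  have hnorm : ‖B x‖ * ‖ContinuousLinearMap.adjoint A x‖ ≤ ‖A‖ * ‖B‖ := by
    rw [mul_comm ‖A‖]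
    refine mul_le_mul (B.unit_le_opNorm x hx.le) ?_ (norm_nonneg _) (norm_nonneg _)
    simpa using (ContinuousLinearMap.adjoint A).unit_le_opNorm x hx.le
  change _ ≤ ‖⟪A (B x), x⟫_𝕜‖
  linarith

lemma two_pow_mul_norm_inner_pow_le {x : E} (hx : ‖x‖ = 1) (T : E →L[𝕜] E) (m : ℕ) :
    2 ^ m * ‖⟪T x, x⟫_𝕜‖ ^ (m + 1) ≤
      ‖⟪(T ^ (m + 1)) x, x⟫_𝕜‖ + (2 ^ m - 1) * ‖T‖ ^ (m + 1) := by
  induction m with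
  | zero => simp
  | succ m ih =>
    set s := ‖⟪T x, x⟫_𝕜‖
    have hs : s ≤ ‖T‖ := norm_inner_le_opNorm hx T
    have hstep := two_mul_norm_inner_mul_norm_inner_sub_le_norm_inner_mul hx (T ^ (m + 1)) T
    rw [← pow_succ] at hstep
    have hpow : ‖T ^ (m + 1)‖ * ‖T‖ ≤ ‖T‖ ^ (m + 2) := by
      rw [pow_succ ‖T‖]
      exact mul_le_mul_of_nonneg_right (norm_pow_le' T m.succ_pos) (norm_nonneg T)
    have h2m : (1 : ℝ) ≤ 2 ^ m := one_le_pow₀ one_le_two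
    have hrest : s * ((2 ^ m - 1) * ‖T‖ ^ (m + 1)) ≤ (2 ^ m - 1) * ‖T‖ ^ (m + 2) := by
      calc s * ((2 ^ m - 1) * ‖T‖ ^ (m + 1)) ≤ ‖T‖ * ((2 ^ m - 1) * ‖T‖ ^ (m + 1)) :=
            mul_le_mul_of_nonneg_right hs (mul_nonneg (by linarith) (by positivity))
        _ = (2 ^ m - 1) * ‖T‖ ^ (m + 2) := by ring
    calc 2 ^ (m + 1) * s ^ (m + 2) = 2 * s * (2 ^ m * s ^ (m + 1)) := by ring
      _ ≤ 2 * s * (‖⟪(T ^ (m + 1)) x, x⟫_𝕜‖ + (2 ^ m - 1) * ‖T‖ ^ (m + 1)) :=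
        mul_le_mul_of_nonneg_left ih (by positivity)
      _ ≤ ‖⟪(T ^ (m + 2)) x, x⟫_𝕜‖ + (2 ^ (m + 1) - 1) * ‖T‖ ^ (m + 2) := by
        rw [pow_succ 2 m]; linarith

end InnerProductSpace

section NumRad

variable {E : Type*} [NormedAddCommGroup E] [InnerProductSpace ℂ E]

lemma numRad_nonneg (T : E →L[ℂ] E) : 0 ≤ numRad T :=
  Real.iSup_nonneg fun _ => norm_nonneg _

lemma numRad_le_norm (T : E →L[ℂ] E) : numRad T ≤ ‖T‖ :=
  Real.iSup_le (fun x => norm_inner_le_opNorm x.2 T) (norm_nonneg T)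

lemma norm_inner_le_numRad (T : E →L[ℂ] E) {x : E} (hx : ‖x‖ = 1) :
    ‖⟪T x, x⟫_ℂ‖ ≤ numRad T :=
  le_ciSup (f := fun x : {x : E // ‖x‖ = 1} => ‖⟪T x, x⟫_ℂ‖)
    ⟨‖T‖, by rintro _ ⟨y, rfl⟩; exact norm_inner_le_opNorm y.2 T⟩ ⟨x, hx⟩

lemma numRad_pow_le_of_forall {T : E →L[ℂ] E} {n : ℕ} (hn : n ≠ 0) {B : ℝ} (hB : 0 ≤ B)
    (h : ∀ x : E, ‖x‖ = 1 → ‖⟪T x, x⟫_ℂ‖ ^ n ≤ B) : numRad T ^ n ≤ B := by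
  have hroot : numRad T ≤ B ^ ((1 : ℝ) / n) :=
    Real.iSup_le (fun x => Real.le_rpow_one_div_of_pow_le (norm_nonneg _) hn (h x x.2))
      (by positivity)
  calc numRad T ^ n ≤ (B ^ ((1 : ℝ) / n)) ^ n := pow_le_pow_left₀ (numRad_nonneg T) hroot n
    _ = B := by rw [one_div, Real.rpow_inv_natCast_pow hB hn]

lemma numRad_zero : numRad (0 : E →L[ℂ] E) = 0 :=
  le_antisymm ((numRad_le_norm 0).trans_eq norm_zero) (numRad_nonneg 0)

end NumRad

theorem numRad_pow_le (T : H →L[ℂ] H) {n : ℕ} (hn : n ≠ 0) :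
    numRad T ^ n ≤ 1 / 2 ^ (n - 1) * numRad (T ^ n) + (1 - 1 / 2 ^ (n - 1)) * ‖T‖ ^ n := by
  obtain ⟨m, rfl⟩ := Nat.exists_eq_add_one_of_ne_zero hn
  rw [Nat.add_sub_cancel]
  have h2m : (1 : ℝ) ≤ 2 ^ m := one_le_pow₀ one_le_two
  have hconv : 1 / 2 ^ m * numRad (T ^ (m + 1)) + (1 - 1 / 2 ^ m) * ‖T‖ ^ (m + 1) =
      (numRad (T ^ (m + 1)) + (2 ^ m - 1) * ‖T‖ ^ (m + 1)) / 2 ^ m := by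
    field_simp
  rw [hconv]
  refine numRad_pow_le_of_forall hn ?_ fun x hx => ?_
  · exact div_nonneg (add_nonneg (numRad_nonneg _) (mul_nonneg (by linarith) (by positivity)))
      (by positivity)
  · rw [le_div_iff₀ (by positivity), mul_comm]
    linarith [two_pow_mul_norm_inner_pow_le hx T m, norm_inner_le_numRad (T ^ (m + 1)) hx]

theorem stmt19 (T : H →L[ℂ] H) (n : ℕ) (hn : 2 ≤ n) :
    (numRad T ≤
      (Real.log ((1 / 2 ^ (n - 1)) * Real.exp (numRad (T ^ n)) +
        (1 - 1 / 2 ^ (n - 1)) * Real.exp (‖T‖ ^ n))) ^ ((1 : ℝ) / n) ∧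
    (Real.log ((1 / 2 ^ (n - 1)) * Real.exp (numRad (T ^ n)) +
        (1 - 1 / 2 ^ (n - 1)) * Real.exp (‖T‖ ^ n))) ^ ((1 : ℝ) / n) ≤ ‖T‖) ∧
    (T ^ n = 0 →
      numRad T ≤
        (Real.log (1 / 2 ^ (n - 1) + (1 - 1 / 2 ^ (n - 1)) * Real.exp 1)) ^ ((1 : ℝ) / n) *
          ‖T‖) := by
  have hn0 : n ≠ 0 := by omega
  have hlin := numRad_pow_le T hn0
  set t : ℝ := 1 / 2 ^ (n - 1)
  have ht0 : 0 ≤ t := by positivity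
  have ht1 : t ≤ 1 := div_le_one_of_le₀ (one_le_pow₀ one_le_two) (by positivity)
  have hlog := hlin.trans (le_log_convexComb_exp ht0 ht1 _ _)
  refine ⟨⟨Real.le_rpow_one_div_of_pow_le (numRad_nonneg T) hn0 hlog, ?_⟩, fun hT => ?_⟩
  · have hwN : numRad (T ^ n) ≤ ‖T‖ ^ n :=
      (numRad_le_norm _).trans (norm_pow_le' T (Nat.pos_of_ne_zero hn0))
    exact Real.rpow_one_div_le_of_le_pow (norm_nonneg T)
      ((pow_nonneg (numRad_nonneg T) n).trans hlog) hn0 (log_convexComb_exp_le ht0 ht1 hwN)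
  · rw [hT, numRad_zero, mul_zero, zero_add] at hlin
    set C := Real.log (t + (1 - t) * Real.exp 1)
    have hC : 1 - t ≤ C := by simpa using le_log_convexComb_exp ht0 ht1 0 1
    have hC0 : 0 ≤ C := (sub_nonneg.2 ht1).trans hC
    refine le_of_pow_le_pow_left₀ hn0 (by positivity) ?_
    calc numRad T ^ n ≤ C * ‖T‖ ^ n := hlin.trans (mul_le_mul_of_nonneg_right hC (by positivity))
      _ = (C ^ ((1 : ℝ) / n) * ‖T‖) ^ n := by
        rw [mul_pow, one_div, Real.rpow_inv_natCast_pow hC0 hn0]
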